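/- Let Φ be a crystallographic root system with Weyl group W and simple roots Δ. A Φ-poset R lies in WOIP(Φ) := { R(w) ∩ R(w') : w ≤ w' in weak order } (where R(w) = w(Φ⁺)) if and only if for all α, β both in Φ⁺ or both in Φ⁻ with α + β ∈ R, one has α ∈ R or β ∈ R. -/

import Mathlib

open Pointwise

structure RootSys (V : Type*) [NormedAddCommGroup V] [InnerProductSpace ℝ V] where
  Φ : Set V
  finite : Φ.Finite
  nonzero : ∀ α ∈ Φ, α ≠ (0 : V)
  line : ∀ α ∈ Φ, Φ ∩ {x : V | ∃ t : ℝ, x = t • α} = {α, -α}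
  reflect : ∀ α ∈ Φ, ∀ β ∈ Φ, β - (2 * (inner ℝ α β : ℝ) / (inner ℝ α α : ℝ)) • α ∈ Φ

variable {V : Type*} [NormedAddCommGroup V] [InnerProductSpace ℝ V]

/-- `Φ` is crystallographic: `⟨α^∨, β⟩ ∈ ℤ` for all roots `α, β`. -/
def RootSys.IsCrystallographic (R : RootSys V) : Prop :=
  ∀ α ∈ R.Φ, ∀ β ∈ R.Φ, ∃ n : ℤ, 2 * (inner ℝ α β : ℝ) / (inner ℝ α α : ℝ) = (n : ℝ)

/-- A subset `S ⊆ Φ` is closed if it is stable under sums of two elements staying in `Φ`. -/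
def RootSys.IsClosedSubset (R : RootSys V) (S : Set V) : Prop :=
  ∀ α ∈ S, ∀ β ∈ S, α + β ∈ R.Φ → α + β ∈ S

/-- A set of roots is antisymmetric if it never contains both `α` and `-α`. -/
def IsAntisymSet (S : Set V) : Prop := ∀ α ∈ S, -α ∉ S

/-- A `Φ`-poset: an antisymmetric closed subset of `Φ`. -/
def RootSys.IsPoset (R : RootSys V) (S : Set V) : Prop :=
  S ⊆ R.Φ ∧ IsAntisymSet S ∧ R.IsClosedSubset S

/-- Closure: roots that are nonnegative integer combinations (multiset sums) of elements of `T`. -/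
def RootSys.clos (R : RootSys V) (T : Set V) : Set V :=
  {γ ∈ R.Φ | ∃ M : Multiset V, (∀ x ∈ M, x ∈ T) ∧ M.sum = γ}

/-- Nonnegative integer combinations (multiset sums) of elements of `T`. -/
def nncomb (T : Set V) : Set V :=
  {v | ∃ M : Multiset V, (∀ x ∈ M, x ∈ T) ∧ M.sum = v}

/-- A root system equipped with a generic linear functional determining positive roots. -/
structure PosRootSys (V : Type*) [NormedAddCommGroup V] [InnerProductSpace ℝ V]
    extends RootSys V where
  f : V →ₗ[ℝ] ℝ
  generic : ∀ α ∈ Φ, f α ≠ 0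

def PosRootSys.Pos (P : PosRootSys V) : Set V := {α ∈ P.Φ | 0 < P.f α}

def PosRootSys.Neg (P : PosRootSys V) : Set V := {α ∈ P.Φ | P.f α < 0}

/-- The weak order: `R ≼ S` iff `R⁺ ⊇ S⁺` and `R⁻ ⊆ S⁻`. -/
def PosRootSys.wle (P : PosRootSys V) (R S : Set V) : Prop :=
  S ∩ P.Pos ⊆ R ∩ P.Pos ∧ R ∩ P.Neg ⊆ S ∩ P.Neg

/-- `R` is semiclosed if both `R⁺` and `R⁻` are closed. -/
def PosRootSys.SemiClosed (P : PosRootSys V) (S : Set V) : Prop :=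
  S ⊆ P.Φ ∧ P.toRootSys.IsClosedSubset (S ∩ P.Pos) ∧
    P.toRootSys.IsClosedSubset (S ∩ P.Neg)

/-- Negative closure deletion. -/
def PosRootSys.ncd (P : PosRootSys V) (S : Set V) : Set V :=
  S \ {α | α ∈ S ∩ P.Neg ∧ ∃ X : Finset V, ↑X ⊆ S ∩ P.Pos ∧ α + X.sum id ∈ P.Φ \ S}

/-- Positive closure deletion. -/
def PosRootSys.pcd (P : PosRootSys V) (S : Set V) : Set V :=
  S \ {α | α ∈ S ∩ P.Pos ∧ ∃ X : Finset V, ↑X ⊆ S ∩ P.Neg ∧ α + X.sum id ∈ P.Φ \ S}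

/-- Meet formula on closed subsets. -/
def PosRootSys.wmeet (P : PosRootSys V) (R S : Set V) : Set V :=
  P.ncd (P.toRootSys.clos ((R ∪ S) ∩ P.Pos) ∪ ((R ∩ S) ∩ P.Neg))

/-- Join formula on closed subsets. -/
def PosRootSys.wjoin (P : PosRootSys V) (R S : Set V) : Set V :=
  P.pcd (((R ∩ S) ∩ P.Pos) ∪ P.toRootSys.clos ((R ∪ S) ∩ P.Neg))

/-- The Weyl group: the subgroup of linear isometries generated by the reflections
orthogonal to the roots. -/
noncomputable def RootSys.weylGroup [FiniteDimensional ℝ V] (R : RootSys V) :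
    Subgroup (V ≃ₗᵢ[ℝ] V) :=
  Subgroup.closure {e | ∃ α ∈ R.Φ, e = Submodule.reflection (Submodule.span ℝ {α})ᗮ}

/-- Inversion set: `inv(w) = Φ⁺ ∩ w(Φ⁻)`. -/
def PosRootSys.invSet (P : PosRootSys V) (w : V ≃ₗᵢ[ℝ] V) : Set V :=
  P.Pos ∩ (⇑w '' P.Neg)

/-!
A sum of two roots lying in `w(Φ⁺)` has a summand in `w(Φ⁺)`, because `f ∘ w⁻¹` is additive.
Since `inv v ⊆ inv w` means `Φ⁺ ∩ w(Φ⁺) ⊆ v(Φ⁺)` and `Φ⁻ ∩ v(Φ⁺) ⊆ w(Φ⁺)`, applying this to `w`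
for positive and to `v` for negative summands shows that `v(Φ⁺) ∩ w(Φ⁺)` satisfies the condition.

Conversely, the condition makes `Φ⁺ \ R` and `Φ⁺ ∩ -R` biclosed (closed, with closed complement
in `Φ⁺`), and every biclosed `A` is an inversion set: an `f`-minimal `α ∈ A` is not a sum of two
positive roots, so, `Φ` being crystallographic, `s_α` permutes `Φ⁺ \ {α}`; then
`s_α (A \ {α})` is a smaller biclosed set, and if it is `inv w` then `A = inv (s_α w)`.
The elements `v`, `w` with these two inversion sets satisfy `R = v(Φ⁺) ∩ w(Φ⁺)`.
-/

open scoped InnerProductSpace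

namespace RootSys

variable (R : RootSys V)

theorem eq_or_eq_neg_of_eq_smul {α β : V} (hα : α ∈ R.Φ) (hβ : β ∈ R.Φ) {t : ℝ}
    (h : β = t • α) : β = α ∨ β = -α := by
  have : β ∈ R.Φ ∩ {x | ∃ t : ℝ, x = t • α} := ⟨hβ, t, h⟩
  simpa [R.line α hα] using this

theorem neg_mem {α : V} (hα : α ∈ R.Φ) : -α ∈ R.Φ := by
  have : -α ∈ R.Φ ∩ {x | ∃ t : ℝ, x = t • α} := by
    rw [R.line α hα]
    exact Or.inr rfl
  exact this.1

theorem neg_mem_iff {α : V} : -α ∈ R.Φ ↔ α ∈ R.Φ :=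
  ⟨fun h => neg_neg α ▸ R.neg_mem h, R.neg_mem⟩

theorem add_self_notMem {α : V} (hα : α ∈ R.Φ) : α + α ∉ R.Φ := by
  intro h
  apply R.nonzero α hα
  rcases R.eq_or_eq_neg_of_eq_smul hα h (two_smul ℝ α).symm with h2 | h2
  · simpa using h2
  · have : (3 : ℝ) • α = 0 := by linear_combination (norm := module) h2
    simpa using this

theorem sub_mem_of_inner_pos (hcr : R.IsCrystallographic) {α β : V} (hα : α ∈ R.Φ)
    (hβ : β ∈ R.Φ) (hαβ : 0 < ⟪α, β⟫_ℝ) (hne : β ≠ α) : β - α ∈ R.Φ := by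
  obtain ⟨m, hm⟩ := hcr α hα β hβ
  obtain ⟨k, hk⟩ := hcr β hβ α hα
  rw [real_inner_comm] at hk
  have hαα : 0 < ⟪α, α⟫_ℝ := real_inner_self_pos.2 (R.nonzero α hα)
  have hββ : 0 < ⟪β, β⟫_ℝ := real_inner_self_pos.2 (R.nonzero β hβ)
  have hcs : ⟪α, β⟫_ℝ < ‖α‖ * ‖β‖ := by
    refine inner_lt_norm_mul_iff_real.2 fun h => ?_
    have hβα : β = (‖β‖ / ‖α‖) • α := by
      rw [div_eq_inv_mul, mul_smul, h, smul_smul,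
        inv_mul_cancel₀ (norm_ne_zero_iff.2 (R.nonzero α hα)), one_smul]
    rcases R.eq_or_eq_neg_of_eq_smul hα hβ hβα with h' | h'
    · exact hne h'
    · rw [h', inner_neg_right] at hαβ
      linarith
  -- `m k = 4 cos² ∠(α, β) < 4`, so one of the positive integers `m`, `k` is `1`.
  have hmk : (m : ℝ) * k < 4 := by
    rw [← hm, ← hk, div_mul_div_comm, div_lt_iff₀ (mul_pos hαα hββ),
      real_inner_self_eq_norm_sq, real_inner_self_eq_norm_sq]
    nlinarith [mul_pos (norm_pos_iff.2 (R.nonzero α hα)) (norm_pos_iff.2 (R.nonzero β hβ))]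
  have hm0 : 0 < m := by
    have : (0 : ℝ) < m := hm ▸ by positivity
    exact_mod_cast this
  have hk0 : 0 < k := by
    have : (0 : ℝ) < k := hk ▸ by positivity
    exact_mod_cast this
  have hmk' : m * k < 4 := by exact_mod_cast hmk
  rcases (show m = 1 ∨ k = 1 by by_contra! h; nlinarith [h.1.lt_of_le' hm0, h.2.lt_of_le' hk0])
    with h1 | h1
  · have := R.reflect α hα β hβ
    rwa [hm, h1, Int.cast_one, one_smul] at this
  · have := R.reflect β hβ α hα
    rw [real_inner_comm, hk, h1, Int.cast_one, one_smul] at this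
    simpa using R.neg_mem this

variable {R} in
theorem IsClosedSubset.neg {S : Set V} (hS : R.IsClosedSubset S) : R.IsClosedSubset (-S) :=
  fun α hα β hβ hαβ => by
    rw [Set.mem_neg, neg_add]
    exact hS _ hα _ hβ (by rw [← neg_add]; exact R.neg_mem hαβ)

end RootSys

noncomputable def rootReflection (α : V) : V ≃ₗᵢ[ℝ] V := (ℝ ∙ α)ᗮ.reflection

theorem rootReflection_apply (α x : V) :
    rootReflection α x = x - (2 * ⟪α, x⟫_ℝ / ⟪α, α⟫_ℝ) • α := by
  rw [rootReflection, Submodule.reflection_orthogonal_apply, Submodule.reflection_apply,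
    Submodule.starProjection_singleton, real_inner_self_eq_norm_sq]
  simp only [RCLike.ofReal_real_eq_id, id]
  module

@[simp]
theorem rootReflection_rootReflection (α x : V) : rootReflection α (rootReflection α x) = x :=
  Submodule.reflection_involutive _ x

theorem rootReflection_symm (α : V) : (rootReflection α).symm = rootReflection α :=
  Submodule.reflection_symm

@[simp]
theorem rootReflection_self (α : V) : rootReflection α α = -α :=
  Submodule.reflection_orthogonalComplement_singleton_eq_neg α

namespace RootSys

variable (R : RootSys V)

theorem rootReflection_mem {α β : V} (hα : α ∈ R.Φ) (hβ : β ∈ R.Φ) :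
    rootReflection α β ∈ R.Φ := by
  rw [rootReflection_apply]
  exact R.reflect α hα β hβ

theorem rootReflection_mem_iff {α β : V} (hα : α ∈ R.Φ) :
    rootReflection α β ∈ R.Φ ↔ β ∈ R.Φ :=
  ⟨fun h => by simpa using R.rootReflection_mem hα h, R.rootReflection_mem hα⟩

variable [FiniteDimensional ℝ V]

theorem rootReflection_mem_weylGroup {α : V} (hα : α ∈ R.Φ) :
    rootReflection α ∈ R.weylGroup :=
  Subgroup.subset_closure ⟨α, hα, rfl⟩

theorem apply_mem_iff_of_mem_weylGroup {w : V ≃ₗᵢ[ℝ] V} (hw : w ∈ R.weylGroup) (x : V) :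
    w x ∈ R.Φ ↔ x ∈ R.Φ := by
  induction hw using Subgroup.closure_induction generalizing x with
  | mem _ h =>
    obtain ⟨α, hα, rfl⟩ := h
    exact R.rootReflection_mem_iff hα
  | one => rfl
  | mul _ _ _ _ hu hv => exact (hu _).trans (hv x)
  | inv u _ hu => simpa using (hu (u⁻¹ x)).symm

theorem symm_apply_mem_iff_of_mem_weylGroup {w : V ≃ₗᵢ[ℝ] V} (hw : w ∈ R.weylGroup) (x : V) :
    w.symm x ∈ R.Φ ↔ x ∈ R.Φ := by
  simpa using (R.apply_mem_iff_of_mem_weylGroup hw (w.symm x)).symm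

end RootSys

namespace PosRootSys

variable (P : PosRootSys V)

theorem mem_pos_or_mem_neg {x : V} (hx : x ∈ P.Φ) : x ∈ P.Pos ∨ x ∈ P.Neg :=
  (P.generic x hx).lt_or_gt.symm.imp (fun h => ⟨hx, h⟩) fun h => ⟨hx, h⟩

theorem notMem_neg_of_mem_pos {x : V} (hx : x ∈ P.Pos) : x ∉ P.Neg :=
  fun h => lt_asymm hx.2 h.2

theorem mem_pos_iff_notMem_neg {x : V} (hx : x ∈ P.Φ) : x ∈ P.Pos ↔ x ∉ P.Neg :=
  ⟨P.notMem_neg_of_mem_pos, (P.mem_pos_or_mem_neg hx).resolve_right⟩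

variable {P}

theorem neg_mem_neg_iff {x : V} : -x ∈ P.Neg ↔ x ∈ P.Pos := by
  simp [Pos, Neg, P.neg_mem_iff]

theorem neg_mem_pos_iff {x : V} : -x ∈ P.Pos ↔ x ∈ P.Neg := by
  simp [Pos, Neg, P.neg_mem_iff]

theorem add_mem_pos {x y : V} (hx : x ∈ P.Pos) (hy : y ∈ P.Pos) (hxy : x + y ∈ P.Φ) :
    x + y ∈ P.Pos :=
  ⟨hxy, by rw [map_add]; exact add_pos hx.2 hy.2⟩

theorem neg_mem_image_neg_iff (w : V ≃ₗᵢ[ℝ] V) {x : V} : -x ∈ w '' P.Neg ↔ x ∈ w '' P.Pos := by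
  simp only [w.image_eq_preimage_symm, Set.mem_preimage, map_neg, neg_mem_neg_iff]

theorem neg_mem_invSet_iff (w : V ≃ₗᵢ[ℝ] V) {x : V} (hx : x ∈ P.Neg) :
    -x ∈ P.invSet w ↔ x ∈ w '' P.Pos := by
  simp only [invSet, Set.mem_inter_iff, neg_mem_pos_iff, hx, true_and, neg_mem_image_neg_iff]

theorem neg_inter_image_pos_subset {v w : V ≃ₗᵢ[ℝ] V} (hvw : P.invSet v ⊆ P.invSet w) :
    P.Neg ∩ v '' P.Pos ⊆ w '' P.Pos := fun _ ⟨hx, hxv⟩ =>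
  (neg_mem_invSet_iff w hx).1 (hvw ((neg_mem_invSet_iff v hx).2 hxv))

variable (P) in
def IsIndecomposable (α : V) : Prop :=
  α ∈ P.Pos ∧ ∀ x ∈ P.Pos, ∀ y ∈ P.Pos, x + y ≠ α

theorem rootReflection_mem_pos (hcr : P.toRootSys.IsCrystallographic) {α : V}
    (hα : P.IsIndecomposable α) {β : V} (hβ : β ∈ P.Pos) (hβα : β ≠ α) :
    rootReflection α β ∈ P.Pos := by
  -- A counterexample `γ` with `f γ` minimal would give the smaller counterexample `γ - α`,
  -- since `s_α (γ - α) = s_α γ + α`.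
  by_contra hsβ
  obtain ⟨γ, ⟨hγ, hγα, hsγ⟩, hmin⟩ := Set.exists_min_image
    {γ | γ ∈ P.Pos ∧ γ ≠ α ∧ rootReflection α γ ∉ P.Pos} P.f
    (P.finite.subset fun γ hγ => hγ.1.1) ⟨β, hβ, hβα, hsβ⟩
  have hsγ' : rootReflection α γ ∈ P.Neg :=
    (P.mem_pos_or_mem_neg (P.rootReflection_mem hα.1.1 hγ.1)).resolve_left hsγ
  have hαγ : 0 < ⟪α, γ⟫_ℝ := by
    have hf := hsγ'.2
    rw [rootReflection_apply, map_sub, map_smul, smul_eq_mul] at hf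
    have hc : 0 < 2 * ⟪α, γ⟫_ℝ / ⟪α, α⟫_ℝ := by nlinarith [hα.1.2, hγ.2]
    have := (div_pos_iff_of_pos_right (real_inner_self_pos.2 (P.nonzero α hα.1.1))).1 hc
    linarith
  have hδ : γ - α ∈ P.Pos := by
    refine (P.mem_pos_or_mem_neg (P.sub_mem_of_inner_pos hcr hα.1.1 hγ.1 hαγ hγα)).resolve_right
      fun h => hα.2 γ hγ (α - γ) ?_ (add_sub_cancel γ α)
    rwa [← neg_sub, neg_mem_pos_iff]
  have hδα : γ - α ≠ α := fun h =>
    P.add_self_notMem hα.1.1 (sub_eq_iff_eq_add.1 h ▸ hγ.1)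
  have hsδ : rootReflection α (γ - α) ∉ P.Pos := fun h => by
    refine hα.2 _ h _ (neg_mem_pos_iff.2 hsγ') ?_
    rw [map_sub, rootReflection_self]
    abel
  have := hmin (γ - α) ⟨hδ, hδα, hsδ⟩
  rw [map_sub] at this
  linarith [hα.1.2]

theorem rootReflection_mem_pos_diff_iff (hcr : P.toRootSys.IsCrystallographic) {α : V}
    (hα : P.IsIndecomposable α) {x : V} :
    rootReflection α x ∈ P.Pos \ {α} ↔ x ∈ P.Pos \ {α} := by
  have maps : ∀ y ∈ P.Pos \ {α}, rootReflection α y ∈ P.Pos \ {α} := fun y ⟨hy, hyα⟩ =>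
    ⟨rootReflection_mem_pos hcr hα hy hyα, fun h => P.notMem_neg_of_mem_pos hy <| by
      rw [← rootReflection_rootReflection α y, Set.mem_singleton_iff.1 h, rootReflection_self,
        neg_mem_neg_iff]
      exact hα.1⟩
  exact ⟨fun h => by simpa using maps _ h, maps x⟩

theorem invSet_one : P.invSet 1 = ∅ := by
  ext x
  simp only [invSet, LinearIsometryEquiv.coe_one, Set.image_id, Set.mem_inter_iff,
    Set.mem_empty_iff_false, iff_false, not_and]
  exact P.notMem_neg_of_mem_pos

variable (P) in
def IsBiclosed (A : Set V) : Prop :=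
  A ⊆ P.Pos ∧ P.IsClosedSubset A ∧ P.IsClosedSubset (P.Pos \ A)

theorem IsBiclosed.finite {A : Set V} (hA : P.IsBiclosed A) : A.Finite :=
  P.finite.subset fun _ hx => (hA.1 hx).1

theorem IsBiclosed.pos_diff {A : Set V} (hA : P.IsBiclosed A) : P.IsBiclosed (P.Pos \ A) :=
  ⟨Set.sdiff_subset, hA.2.2, by rw [Set.sdiff_sdiff_cancel_left hA.1]; exact hA.2.1⟩

theorem isBiclosed_pos_diff {S : Set V} (hS : P.IsClosedSubset S)
    (hsplit : ∀ α ∈ P.Pos, ∀ β ∈ P.Pos, α + β ∈ S → α ∈ S ∨ β ∈ S) :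
    P.IsBiclosed (P.Pos \ S) := by
  refine ⟨Set.sdiff_subset, fun x hx y hy hxy => ⟨add_mem_pos hx.1 hy.1 hxy, fun h =>
    (hsplit x hx.1 y hy.1 h).elim hx.2 hy.2⟩, ?_⟩
  rw [Set.sdiff_sdiff_right_self]
  exact fun x hx y hy hxy => ⟨add_mem_pos hx.1 hy.1 hxy, hS x hx.2 y hy.2 hxy⟩

theorem IsBiclosed.exists_isIndecomposable {A : Set V} (hA : P.IsBiclosed A)
    (hne : A.Nonempty) : ∃ α ∈ A, P.IsIndecomposable α := by
  obtain ⟨α, hαA, hmin⟩ := Set.exists_min_image A P.f hA.finite hne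
  refine ⟨α, hαA, hA.1 hαA, fun x hx y hy hxy => ?_⟩
  have hxA : x ∉ A := fun h => by
    have := hmin x h
    rw [← hxy, map_add] at this
    linarith [hy.2]
  have hyA : y ∉ A := fun h => by
    have := hmin y h
    rw [← hxy, map_add] at this
    linarith [hx.2]
  exact (hA.2.2 x ⟨hx, hxA⟩ y ⟨hy, hyA⟩ (hxy ▸ (hA.1 hαA).1)).2 (hxy ▸ hαA)

theorem IsBiclosed.image_rootReflection_diff (hcr : P.toRootSys.IsCrystallographic)
    {A : Set V} (hA : P.IsBiclosed A) {α : V} (hα : P.IsIndecomposable α) (hαA : α ∈ A) :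
    P.IsBiclosed (rootReflection α '' (A \ {α})) := by
  set s := rootReflection α
  refine ⟨?_, ?_, ?_⟩
  · rintro _ ⟨a, ⟨ha, haα⟩, rfl⟩
    exact ((rootReflection_mem_pos_diff_iff hcr hα).2 ⟨hA.1 ha, haα⟩).1
  · rintro _ ⟨a, ⟨ha, haα⟩, rfl⟩ _ ⟨b, ⟨hb, hbα⟩, rfl⟩ hab
    rw [← map_add] at hab ⊢
    exact ⟨a + b, ⟨hA.2.1 a ha b hb ((P.rootReflection_mem_iff hα.1.1).1 hab),
      hα.2 a (hA.1 ha) b (hA.1 hb)⟩, rfl⟩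
  · intro x ⟨hx, hxB⟩ y ⟨hy, hyB⟩ hxy
    refine ⟨add_mem_pos hx hy hxy, ?_⟩
    rintro ⟨c, ⟨hc, -⟩, hcxy⟩
    -- `c = s x + s y ∈ A`: if `x = α` then `s y = c + α ∈ A`; if neither summand is `α`,
    -- both `s x, s y` lie in the closed set `Φ⁺ \ A`.
    have hc' : c = s x + s y := by rw [← map_add, ← hcxy, rootReflection_rootReflection]
    have hsA : ∀ z ∈ P.Pos, z ∉ s '' (A \ {α}) → z ≠ α → s z ∈ P.Pos \ A := fun z hz hzB hzα =>
      ⟨((rootReflection_mem_pos_diff_iff hcr hα).2 ⟨hz, hzα⟩).1, fun h => hzB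
        ⟨s z, ⟨h, ((rootReflection_mem_pos_diff_iff hcr hα).2 ⟨hz, hzα⟩).2⟩,
          rootReflection_rootReflection α z⟩⟩
    have hαs : s α + α = 0 := by rw [rootReflection_self, neg_add_cancel]
    by_cases hxα : x = α
    · have hyα : y ≠ α := fun h => P.add_self_notMem hα.1.1 (by rwa [hxα, h] at hxy)
      refine (hsA y hy hyB hyα).2 (?_ : s y ∈ A)
      have : c + α = s y := by rw [hc', hxα, add_right_comm, hαs, zero_add]
      exact this ▸ hA.2.1 c hc α hαA (this ▸ (hsA y hy hyB hyα).1.1)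
    by_cases hyα : y = α
    · refine (hsA x hx hxB hxα).2 (?_ : s x ∈ A)
      have : c + α = s x := by rw [hc', hyα, add_assoc, hαs, add_zero]
      exact this ▸ hA.2.1 c hc α hαA (this ▸ (hsA x hx hxB hxα).1.1)
    exact (hA.2.2 _ (hsA x hx hxB hxα) _ (hsA y hy hyB hyα) (hc' ▸ (hA.1 hc).1)).2 (hc' ▸ hc)

section WeylGroup

variable [FiniteDimensional ℝ V] {w : V ≃ₗᵢ[ℝ] V}

theorem image_pos_subset_roots (hw : w ∈ P.toRootSys.weylGroup) : w '' P.Pos ⊆ P.Φ := by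
  rintro _ ⟨x, hx, rfl⟩
  exact (P.apply_mem_iff_of_mem_weylGroup hw x).2 hx.1

theorem mem_image_pos_iff_notMem_invSet (hw : w ∈ P.toRootSys.weylGroup) {x : V}
    (hx : x ∈ P.Pos) : x ∈ w '' P.Pos ↔ x ∉ P.invSet w := by
  simp only [invSet, Set.mem_inter_iff, hx, true_and, w.image_eq_preimage_symm,
    Set.mem_preimage]
  exact P.mem_pos_iff_notMem_neg ((P.symm_apply_mem_iff_of_mem_weylGroup hw x).2 hx.1)

theorem pos_inter_image_pos_subset {v : V ≃ₗᵢ[ℝ] V} (hv : v ∈ P.toRootSys.weylGroup)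
    (hw : w ∈ P.toRootSys.weylGroup) (hvw : P.invSet v ⊆ P.invSet w) :
    P.Pos ∩ w '' P.Pos ⊆ v '' P.Pos := fun _ ⟨hx, hxw⟩ =>
  (mem_image_pos_iff_notMem_invSet hv hx).2 fun h =>
    (mem_image_pos_iff_notMem_invSet hw hx).1 hxw (hvw h)

theorem mem_or_mem_of_add_mem_image_pos (hw : w ∈ P.toRootSys.weylGroup) {α β : V}
    (hα : α ∈ P.Φ) (hβ : β ∈ P.Φ) (h : α + β ∈ w '' P.Pos) :
    α ∈ w '' P.Pos ∨ β ∈ w '' P.Pos := by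
  simp only [w.image_eq_preimage_symm, Set.mem_preimage] at h ⊢
  by_contra! hn
  rw [mem_pos_iff_notMem_neg _ ((P.symm_apply_mem_iff_of_mem_weylGroup hw _).2 hα),
    mem_pos_iff_notMem_neg _ ((P.symm_apply_mem_iff_of_mem_weylGroup hw _).2 hβ),
    not_not, not_not] at hn
  have := h.2
  rw [map_add, map_add] at this
  linarith [hn.1.2, hn.2.2]

theorem mem_or_mem_of_add_mem_inter_image_pos {v : V ≃ₗᵢ[ℝ] V}
    (hv : v ∈ P.toRootSys.weylGroup) (hw : w ∈ P.toRootSys.weylGroup)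
    (hvw : P.invSet v ⊆ P.invSet w) {α β : V}
    (hαβ : (α ∈ P.Pos ∧ β ∈ P.Pos) ∨ (α ∈ P.Neg ∧ β ∈ P.Neg))
    (h : α + β ∈ v '' P.Pos ∩ w '' P.Pos) :
    α ∈ v '' P.Pos ∩ w '' P.Pos ∨ β ∈ v '' P.Pos ∩ w '' P.Pos := by
  rcases hαβ with ⟨hα, hβ⟩ | ⟨hα, hβ⟩
  · exact (mem_or_mem_of_add_mem_image_pos hw hα.1 hβ.1 h.2).imp
      (fun h' => ⟨pos_inter_image_pos_subset hv hw hvw ⟨hα, h'⟩, h'⟩)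
      fun h' => ⟨pos_inter_image_pos_subset hv hw hvw ⟨hβ, h'⟩, h'⟩
  · exact (mem_or_mem_of_add_mem_image_pos hv hα.1 hβ.1 h.1).imp
      (fun h' => ⟨h', neg_inter_image_pos_subset hvw ⟨hα, h'⟩⟩)
      fun h' => ⟨h', neg_inter_image_pos_subset hvw ⟨hβ, h'⟩⟩

theorem invSet_rootReflection_mul (hcr : P.toRootSys.IsCrystallographic) {α : V}
    (hα : P.IsIndecomposable α) (hw : w ∈ P.toRootSys.weylGroup) (hαw : α ∉ P.invSet w) :
    P.invSet (rootReflection α * w) = insert α (rootReflection α '' P.invSet w) := by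
  have hαw' : α ∉ w '' P.Neg := fun h => hαw ⟨hα.1, h⟩
  ext x
  simp only [invSet, LinearIsometryEquiv.coe_mul, Set.image_comp, Set.mem_inter_iff,
    Set.mem_insert_iff, (rootReflection α).image_eq_preimage_symm, rootReflection_symm,
    Set.mem_preimage]
  by_cases hx : x = α
  · subst hx
    simp only [rootReflection_self, neg_mem_image_neg_iff, hα.1, true_and, true_or, iff_true]
    exact (mem_image_pos_iff_notMem_invSet hw hα.1).2 hαw
  · simp only [hx, false_or]
    constructor
    · rintro ⟨hxP, h⟩
      exact ⟨((rootReflection_mem_pos_diff_iff hcr hα).2 ⟨hxP, hx⟩).1, h⟩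
    · rintro ⟨hsx, h⟩
      refine ⟨((rootReflection_mem_pos_diff_iff hcr hα).1 ⟨hsx, fun h' => hαw' ?_⟩).1, h⟩
      rwa [← Set.mem_singleton_iff.1 h']

theorem exists_invSet_eq_of_isBiclosed (hcr : P.toRootSys.IsCrystallographic) {A : Set V}
    (hA : P.IsBiclosed A) : ∃ w ∈ P.toRootSys.weylGroup, P.invSet w = A := by
  induction hn : A.ncard generalizing A with
  | zero =>
    exact ⟨1, one_mem _, by rw [invSet_one, eq_comm, ← Set.ncard_eq_zero hA.finite, hn]⟩
  | succ n ih =>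
    obtain ⟨α, hαA, hα⟩ := hA.exists_isIndecomposable (Set.nonempty_of_ncard_ne_zero (by omega))
    obtain ⟨w, hw, hwA⟩ := ih (hA.image_rootReflection_diff hcr hα hαA) <| by
      rw [Set.ncard_image_of_injective _ (rootReflection α).injective,
        Set.ncard_sdiff_singleton_of_mem hαA, hn, Nat.add_sub_cancel]
    have hαw : α ∉ P.invSet w := by
      rw [hwA]
      rintro ⟨a, ⟨ha, haα⟩, h⟩
      exact ((rootReflection_mem_pos_diff_iff hcr hα).2 ⟨hA.1 ha, haα⟩).2 h
    refine ⟨rootReflection α * w, mul_mem (P.rootReflection_mem_weylGroup hα.1.1) hw, ?_⟩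
    rw [invSet_rootReflection_mul hcr hα hw hαw, hwA, Set.image_image]
    simp only [rootReflection_rootReflection, Set.image_id', Set.insert_sdiff_singleton,
      Set.insert_eq_of_mem hαA]

theorem exists_eq_inter_image_pos (hcr : P.toRootSys.IsCrystallographic) {R : Set V}
    (hR : P.IsPoset R)
    (hsplit : ∀ α β : V, ((α ∈ P.Pos ∧ β ∈ P.Pos) ∨ (α ∈ P.Neg ∧ β ∈ P.Neg)) →
      α + β ∈ R → α ∈ R ∨ β ∈ R) :
    ∃ v w : V ≃ₗᵢ[ℝ] V, v ∈ P.toRootSys.weylGroup ∧ w ∈ P.toRootSys.weylGroup ∧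
      P.invSet v ⊆ P.invSet w ∧ R = v '' P.Pos ∩ w '' P.Pos := by
  obtain ⟨hRΦ, hanti, hRcl⟩ := hR
  -- `inv v = Φ⁺ ∩ -R` and `inv w = Φ⁺ \ R`.
  obtain ⟨v, hv, hvR⟩ := exists_invSet_eq_of_isBiclosed hcr <|
    (isBiclosed_pos_diff hRcl.neg fun α hα β hβ h =>
      hsplit (-α) (-β) (Or.inr ⟨neg_mem_neg_iff.2 hα, neg_mem_neg_iff.2 hβ⟩)
        (by rw [← neg_add]; exact h)).pos_diff
  obtain ⟨w, hw, hwR⟩ := exists_invSet_eq_of_isBiclosed hcr <|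
    isBiclosed_pos_diff hRcl fun α hα β hβ => hsplit α β (Or.inl ⟨hα, hβ⟩)
  refine ⟨v, w, hv, hw, ?_, ?_⟩
  · rw [hvR, hwR]
    rintro x ⟨hx, hx'⟩
    exact ⟨hx, fun hxR => hx' ⟨hx, hanti x hxR⟩⟩
  ext x
  by_cases hxΦ : x ∈ P.Φ
  · rcases P.mem_pos_or_mem_neg hxΦ with hx | hx
    · rw [Set.mem_inter_iff, mem_image_pos_iff_notMem_invSet hv hx,
        mem_image_pos_iff_notMem_invSet hw hx, hvR, hwR]
      have := hanti x
      simp only [Set.mem_sdiff, Set.mem_neg, hx, true_and, not_not] at this ⊢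
      tauto
    · rw [Set.mem_inter_iff, ← neg_mem_invSet_iff v hx, ← neg_mem_invSet_iff w hx, hvR, hwR]
      have := hanti x
      simp only [Set.mem_sdiff, Set.mem_neg, neg_mem_pos_iff.2 hx, neg_neg, true_and,
        not_not] at this ⊢
      tauto
  · exact iff_of_false (fun h => hxΦ (hRΦ h)) fun h => hxΦ (image_pos_subset_roots hv h.1)

end WeylGroup

end PosRootSys

theorem stmt17 [FiniteDimensional ℝ V] (P : PosRootSys V)
    (hcr : P.toRootSys.IsCrystallographic)
    (R : Set V) (hR : P.toRootSys.IsPoset R) :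
    (∃ v w : V ≃ₗᵢ[ℝ] V, v ∈ P.toRootSys.weylGroup ∧ w ∈ P.toRootSys.weylGroup ∧
        P.invSet v ⊆ P.invSet w ∧ R = (⇑v '' P.Pos) ∩ (⇑w '' P.Pos)) ↔
      (∀ α β : V, ((α ∈ P.Pos ∧ β ∈ P.Pos) ∨ (α ∈ P.Neg ∧ β ∈ P.Neg)) →
        α + β ∈ R → α ∈ R ∨ β ∈ R) := by
  refine ⟨?_, P.exists_eq_inter_image_pos hcr hR⟩
  rintro ⟨v, w, hv, hw, hvw, rfl⟩ α β hαβ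
  exact P.mem_or_mem_of_add_mem_inter_image_pos hv hw hvw hαβ
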